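/- Let a₁, …, aₙ ∈ ℤⁿ be linearly independent integer vectors and let Ã = [a₁, …, aₙ]ᵀ be the matrix with rows a₁ᵀ, …, aₙᵀ. Then 1/δ̂({a₁,…,a_{n−1}}, aₙ) ≤ n·Δ₁·Δ_{n−1}, where Δ₁ is the largest absolute value of an entry of Ã and Δ_{n−1} is the largest absolute value of a sub-determinant of Ã of size n−1. -/

import Mathlib

/-!
Let `c` be the last column of the adjugate of `Ã`, the vector of signed `(n-1)`-minors. It is
orthogonal to `a₁, …, a_{n-1}` and `⟪aₙ, c⟫ = det Ã`, a nonzero integer. The projection `p` of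
`aₙ` onto the orthogonal complement of their span therefore still has `⟪p, c⟫ = det Ã`, so
`1 ≤ ‖p‖ ‖c‖` and `1 / δ̂ = ‖aₙ‖ / ‖p‖ ≤ ‖aₙ‖ ‖c‖ ≤ (√n Δ₁) (√n Δ_{n-1})`.
-/

open scoped RealInnerProductSpace BigOperators
open MeasureTheory ProbabilityTheory Matrix

noncomputable section

/-- Identity map from plain vectors to Euclidean space (L2 norm). -/
def toE {n : ℕ} (x : Fin n → ℝ) : EuclideanSpace ℝ (Fin n) := WithLp.toLp 2 x

/-- Identity map from Euclidean space to plain vectors. -/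
def ofE {n : ℕ} (x : EuclideanSpace ℝ (Fin n)) : Fin n → ℝ := x

/-- Normalization N(x) = x / ‖x‖. -/
def nrm {n : ℕ} (x : EuclideanSpace ℝ (Fin n)) : EuclideanSpace ℝ (Fin n) := ‖x‖⁻¹ • x

/-- δ̂(S, v): the norm of the projection of v onto the orthogonal complement of span S,
divided by ‖v‖ (the sine of the angle between v and span S). -/
def deltaHat {n : ℕ} (S : Set (EuclideanSpace ℝ (Fin n))) (v : EuclideanSpace ℝ (Fin n)) : ℝ :=
  ‖(Submodule.orthogonalProjection ((Submodule.span ℝ S)ᗮ) v : EuclideanSpace ℝ (Fin n))‖ / ‖v‖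

/-- δ(z₁, …, zₙ) = min over k of δ̂({z_i : i ≠ k}, z_k). -/
def deltaVec {n : ℕ} (z : Fin n → EuclideanSpace ℝ (Fin n)) : ℝ :=
  ⨅ k : Fin n, deltaHat (z '' {i | i ≠ k}) (z k)

/-- δ(A) for rows a₁, …, a_m: the minimum of δ over all choices of n linearly
independent rows. -/
def deltaRows {m n : ℕ} (a : Fin m → EuclideanSpace ℝ (Fin n)) : ℝ :=
  sInf { d | ∃ f : Fin n → Fin m, LinearIndependent ℝ (a ∘ f) ∧ d = deltaVec (a ∘ f) }

/-- A vertex of the polyhedron {x : ∀ i, ⟪a i, x⟫ ≤ b i}. -/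
def IsVertex {m n : ℕ} (a : Fin m → EuclideanSpace ℝ (Fin n)) (b : Fin m → ℝ)
    (z : EuclideanSpace ℝ (Fin n)) : Prop :=
  (∀ i, ⟪a i, z⟫ ≤ b i) ∧ Submodule.span ℝ (a '' {i | ⟪a i, z⟫ = b i}) = ⊤

/-- Two distinct vertices are neighboring if n−1 linearly independent constraints are
tight at both. -/
def Neighboring {m n : ℕ} (a : Fin m → EuclideanSpace ℝ (Fin n)) (b : Fin m → ℝ)
    (z₁ z₂ : EuclideanSpace ℝ (Fin n)) : Prop :=
  IsVertex a b z₁ ∧ IsVertex a b z₂ ∧ z₁ ≠ z₂ ∧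
    ∃ s : Finset (Fin m), s.card = n - 1 ∧
      LinearIndependent ℝ (fun i : s => a i) ∧
      ∀ i ∈ s, ⟪a i, z₁⟫ = b i ∧ ⟪a i, z₂⟫ = b i

/-- The largest absolute value of a sub-determinant of size k. -/
def subdetSup {m n : ℕ} (A : Matrix (Fin m) (Fin n) ℝ) (k : ℕ) : ℝ :=
  ⨆ (f : Fin k → Fin m) (_ : Function.Injective f) (g : Fin k → Fin n)
    (_ : Function.Injective g), |(A.submatrix f g).det|

end

open Submodule

theorem le_subdetSup {m n k : ℕ} (A : Matrix (Fin m) (Fin n) ℝ) {f : Fin k → Fin m}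
    (hf : Function.Injective f) {g : Fin k → Fin n} (hg : Function.Injective g) :
    |(A.submatrix f g).det| ≤ subdetSup A k :=
  le_ciSup_of_le (Set.finite_range _).bddAbove f <|
    le_ciSup_of_le (Set.finite_range _).bddAbove hf <|
      le_ciSup_of_le (Set.finite_range _).bddAbove g <|
        le_ciSup_of_le (Set.finite_range _).bddAbove hg le_rfl

theorem abs_apply_le_subdetSup_one {m n : ℕ} (A : Matrix (Fin m) (Fin n) ℝ) (i : Fin m)
    (j : Fin n) : |A i j| ≤ subdetSup A 1 := by
  simpa using le_subdetSup A (f := fun _ : Fin 1 => i) (g := fun _ : Fin 1 => j)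
    (Function.injective_of_subsingleton _) (Function.injective_of_subsingleton _)

theorem abs_adjugate_apply_le_subdetSup {n : ℕ} (A : Matrix (Fin (n + 1)) (Fin (n + 1)) ℝ)
    (i j : Fin (n + 1)) : |A.adjugate i j| ≤ subdetSup A n := by
  rw [adjugate_fin_succ_eq_det_submatrix, abs_mul, abs_neg_one_pow, one_mul]
  exact le_subdetSup A Fin.succAbove_right_injective Fin.succAbove_right_injective

theorem one_le_abs_det_map_intCast {ι : Type*} [Fintype ι] [DecidableEq ι]
    {B : Matrix ι ι ℤ} (h : (B.map ((↑) : ℤ → ℝ)).det ≠ 0) :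
    1 ≤ |(B.map ((↑) : ℤ → ℝ)).det| := by
  rw [← Int.cast_det] at h ⊢
  exact_mod_cast Int.one_le_abs (by exact_mod_cast h)

theorem det_ne_zero_of_linearIndependent_toE {n : ℕ} {A : Matrix (Fin n) (Fin n) ℝ}
    (h : LinearIndependent ℝ fun i => toE (A i)) : A.det ≠ 0 := by
  have hrows : LinearIndependent ℝ A :=
    h.map' (WithLp.linearEquiv 2 ℝ (Fin n → ℝ)).toLinearMap (LinearEquiv.ker _)
  exact (isUnit_iff_isUnit_det A).1 (linearIndependent_rows_iff_isUnit.1 hrows) |>.ne_zero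

theorem EuclideanSpace.norm_le_sqrt_card_mul {ι : Type*} [Fintype ι] {x : EuclideanSpace ℝ ι}
    {M : ℝ} (h : ∀ i, |x i| ≤ M) : ‖x‖ ≤ √(Fintype.card ι) * M := by
  obtain hι | ⟨⟨i₀⟩⟩ := isEmpty_or_nonempty ι
  · simp [EuclideanSpace.norm_eq]
  have hM : 0 ≤ M := (abs_nonneg _).trans (h i₀)
  calc ‖x‖ = √(∑ i, |x i| ^ 2) := by simp [EuclideanSpace.norm_eq]
    _ ≤ √(∑ _ : ι, M ^ 2) := by gcongr with i; exact h i
    _ = √(Fintype.card ι) * M := by simp [Real.sqrt_mul, Real.sqrt_sq hM]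

theorem abs_inner_le_norm_starProjection_mul_norm {E : Type*} [NormedAddCommGroup E]
    [InnerProductSpace ℝ E] (K : Submodule ℝ E) [K.HasOrthogonalProjection] (v : E) {c : E}
    (hc : c ∈ K) : |⟪v, c⟫| ≤ ‖K.starProjection v‖ * ‖c‖ :=
  calc |⟪v, c⟫| = |⟪K.starProjection v, c⟫| := by
        rw [inner_starProjection_left_eq_right, starProjection_eq_self_iff.2 hc]
    _ ≤ ‖K.starProjection v‖ * ‖c‖ := abs_real_inner_le_norm _ _

theorem one_div_deltaHat_le {n : ℕ} {S : Set (EuclideanSpace ℝ (Fin n))}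
    {v c : EuclideanSpace ℝ (Fin n)} (hc : c ∈ (span ℝ S)ᗮ) (hvc : 1 ≤ |⟪v, c⟫|) :
    1 / deltaHat S v ≤ ‖v‖ * ‖c‖ := by
  set p := (span ℝ S)ᗮ.starProjection v
  have hpc : 1 ≤ ‖p‖ * ‖c‖ := hvc.trans (abs_inner_le_norm_starProjection_mul_norm _ v hc)
  have hp : 0 < ‖p‖ := by
    by_contra! h
    nlinarith [norm_nonneg p, norm_nonneg c]
  calc 1 / deltaHat S v = ‖v‖ / ‖p‖ := one_div_div _ _
    _ ≤ ‖v‖ * ‖c‖ := by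
      rw [div_le_iff₀ hp]
      nlinarith [norm_nonneg v]

theorem inner_toE_row_toE_adjugate_col {n : ℕ} (A : Matrix (Fin n) (Fin n) ℝ) (i k : Fin n) :
    ⟪toE (A i), toE fun j => A.adjugate j k⟫ = if i = k then A.det else 0 := by
  have h : ⟪toE (A i), toE fun j => A.adjugate j k⟫ = (A * A.adjugate) i k := by
    simp [toE, PiLp.inner_apply, mul_apply, mul_comm]
  rw [h, mul_adjugate, Matrix.smul_apply, one_apply]
  split_ifs <;> simp

theorem toE_adjugate_col_mem_orthogonal {n : ℕ} (A : Matrix (Fin n) (Fin n) ℝ) (k : Fin n) :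
    toE (fun j => A.adjugate j k) ∈ (span ℝ ((fun i => toE (A i)) '' {i | i ≠ k}))ᗮ := by
  refine isOrtho_iff_le.1 (isOrtho_span.2 ?_) (mem_span_singleton_self _)
  rintro _ rfl _ ⟨i, hi, rfl⟩
  rw [real_inner_comm, inner_toE_row_toE_adjugate_col, if_neg hi]

/-- For linearly independent integer vectors a₁, …, a_{n+1} ∈ ℤ^{n+1} with
Ã the matrix whose rows are a₁ᵀ, …, a_{n+1}ᵀ,
1/δ̂({a₁,…,aₙ}, a_{n+1}) ≤ (n+1)·Δ₁·Δₙ, where Δ₁ is the largest absolute value of an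
entry of Ã and Δₙ the largest absolute value of a sub-determinant of Ã of size n = (n+1)−1. -/
theorem stmt6 {n : ℕ} (a : Fin (n+1) → (Fin (n+1) → ℤ))
    (hli : LinearIndependent ℝ fun i => toE fun j => ((a i j : ℝ))) :
    1 / deltaHat ((fun i => toE fun j => ((a i j : ℝ))) '' {i | i ≠ Fin.last n})
          (toE fun j => ((a (Fin.last n) j : ℝ))) ≤
      ((n : ℝ) + 1) * subdetSup (Matrix.of fun i j => ((a i j : ℝ))) 1 *
        subdetSup (Matrix.of fun i j => ((a i j : ℝ))) n := by
  set A : Matrix (Fin (n + 1)) (Fin (n + 1)) ℝ := of fun i j => (a i j : ℝ)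
  set c := toE fun j => A.adjugate j (Fin.last n)
  have hdet : 1 ≤ |⟪toE (A (Fin.last n)), c⟫| := by
    rw [inner_toE_row_toE_adjugate_col, if_pos rfl]
    exact one_le_abs_det_map_intCast (B := of a) (det_ne_zero_of_linearIndependent_toE hli)
  have hrow : ‖toE (A (Fin.last n))‖ ≤ √(n + 1) * subdetSup A 1 := by
    simpa using EuclideanSpace.norm_le_sqrt_card_mul fun j => abs_apply_le_subdetSup_one A _ j
  have hcol : ‖c‖ ≤ √(n + 1) * subdetSup A n := by
    simpa using EuclideanSpace.norm_le_sqrt_card_mul fun j =>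
      abs_adjugate_apply_le_subdetSup A j (Fin.last n)
  calc 1 / deltaHat _ _ ≤ ‖toE (A (Fin.last n))‖ * ‖c‖ :=
        one_div_deltaHat_le (toE_adjugate_col_mem_orthogonal A _) hdet
    _ ≤ (√(n + 1) * subdetSup A 1) * (√(n + 1) * subdetSup A n) :=
        mul_le_mul hrow hcol (norm_nonneg _) ((norm_nonneg _).trans hrow)
    _ = (n + 1) * subdetSup A 1 * subdetSup A n := by
        rw [mul_mul_mul_comm, Real.mul_self_sqrt (by positivity), mul_assoc]
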